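/- arXiv:2605.22507 — 4 statements merged into one kernel-verified Lean document; each statement's English description precedes it below -/
import Mathlib

section
/- Let d ≥ 1 and H ∈ ℕ, let μ_src and μ_tgt be Borel probability measures on ℝ^d with finite second moments, and let γ⋆ be a coupling of μ_src and μ_tgt that attains W₂²(μ_src, μ_tgt). For h = 0,…,H, let μ⋆_h be the pushforward of γ⋆ under the map (x₀, x_{H+1}) ↦ ( x₀ + (h/(H+1))(x_{H+1} − x₀), x₀ + ((h+1)/(H+1))(x_{H+1} − x₀) ). Then (μ⋆_0,…,μ⋆_H) is feasible for the dynamic primal LP with source μ_src and target μ_tgt, its cost equals W₂²(μ_src, μ_tgt), and it is an optimal solution (its cost is ≤ the cost of every feasible family). -/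
/-!
Splitting each displacement `x_{H+1} - x₀` of `γ⋆` into `H + 1` equal steps gives couplings
`μ⋆_h` of cost `(H + 1)⁻² ∫ ‖x - y‖² dγ⋆` each, so the LP cost of the interpolation is exactly
`W₂²(μsrc, μtgt)`. Conversely, gluing the couplings of any feasible family along their shared
marginals yields a coupling of `μsrc` and `μtgt`; by Minkowski its `L²` cost is at most the sum of
the `L²` costs of the `μ_h`, and Cauchy–Schwarz bounds the square of that sum by
`(H + 1) Σ_h ∫ ‖x - y‖² dμ_h`. Hence `W₂²` is a lower bound for every feasible cost.
-/

open MeasureTheory ENNReal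

/-- The squared Wasserstein-2 distance. -/
noncomputable def W2sq {d : ℕ} (μ ν : Measure (EuclideanSpace ℝ (Fin d))) : ℝ≥0∞ :=
  ⨅ (γ : Measure (EuclideanSpace ℝ (Fin d) × EuclideanSpace ℝ (Fin d)))
    (_ : IsProbabilityMeasure γ ∧ γ.map Prod.fst = μ ∧ γ.map Prod.snd = ν),
      2⁻¹ * ∫⁻ p, (‖p.1 - p.2‖₊ : ℝ≥0∞) ^ 2 ∂γ

/-- Feasibility for the dynamic primal LP with horizon `H`, source `μsrc`, target `μtgt`:
the family consists of probability measures on `ℝ^d × ℝ^d`, the first marginal of `μ 0`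
is `μsrc`, consecutive flow constraints hold, and the second marginal of `μ H` is `μtgt`. -/
def LPfeasible {d : ℕ} (H : ℕ) (μsrc μtgt : Measure (EuclideanSpace ℝ (Fin d)))
    (μ : Fin (H + 1) → Measure (EuclideanSpace ℝ (Fin d) × EuclideanSpace ℝ (Fin d))) : Prop :=
  (∀ h, IsProbabilityMeasure (μ h)) ∧
  (μ 0).map Prod.fst = μsrc ∧
  (∀ h : Fin H, (μ h.castSucc).map Prod.snd = (μ h.succ).map Prod.fst) ∧
  (μ (Fin.last H)).map Prod.snd = μtgt

/-- The cost of a family in the dynamic primal LP: `((H+1)/2) Σ_h ∫ ‖x-y‖² dμ_h`. -/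
noncomputable def LPcost {d : ℕ} (H : ℕ)
    (μ : Fin (H + 1) → Measure (EuclideanSpace ℝ (Fin d) × EuclideanSpace ℝ (Fin d))) : ℝ≥0∞ :=
  ((H : ℝ≥0∞) + 1) / 2 * ∑ h, ∫⁻ p, (‖p.1 - p.2‖₊ : ℝ≥0∞) ^ 2 ∂(μ h)

section Gluing

open ProbabilityTheory

variable {X Y Z : Type*} [MeasurableSpace X] [MeasurableSpace Y] [MeasurableSpace Z]
  [StandardBorelSpace Z] [Nonempty Z]

theorem exists_glue (γ : Measure (X × Y)) (ρ : Measure (Y × Z)) [IsProbabilityMeasure γ]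
    [IsFiniteMeasure ρ] (hlink : γ.map Prod.snd = ρ.map Prod.fst) :
    ∃ m : Measure ((X × Y) × Z), IsProbabilityMeasure m ∧
      m.map Prod.fst = γ ∧ m.map (fun p => (p.1.2, p.2)) = ρ := by
  let κ : Kernel (X × Y) Z := ρ.condKernel.comap Prod.snd measurable_snd
  refine ⟨γ ⊗ₘ κ, inferInstance, Measure.fst_compProd γ κ, ?_⟩
  have hg : Measurable fun p : (X × Y) × Z => (p.1.2, p.2) := by fun_prop
  ext s hs
  rw [Measure.map_apply hg hs, Measure.compProd_apply (hg hs)]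
  -- the glued kernel only reads the middle coordinate
  change ∫⁻ p, ρ.condKernel p.2 (Prod.mk p.2 ⁻¹' s) ∂γ = ρ s
  rw [← lintegral_map (Kernel.measurable_kernel_prodMk_left hs) measurable_snd, hlink,
    ← Measure.compProd_apply hs]
  exact congrArg (fun μ => μ s) (ρ.disintegrate ρ.condKernel)

end Gluing

section QuadraticCost

variable {E : Type*} [NormedAddCommGroup E] [MeasurableSpace E] [BorelSpace E]
  [SecondCountableTopology E]

noncomputable def quadraticCost (γ : Measure (E × E)) : ℝ≥0∞ :=
  ∫⁻ p, (‖p.1 - p.2‖₊ : ℝ≥0∞) ^ 2 ∂γ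

theorem quadraticCost_glue_rpow_le {m : Measure ((E × E) × E)} :
    quadraticCost (m.map fun p => (p.1.1, p.2)) ^ (1 / 2 : ℝ) ≤
      quadraticCost (m.map Prod.fst) ^ (1 / 2 : ℝ) +
        quadraticCost (m.map fun p => (p.1.2, p.2)) ^ (1 / 2 : ℝ) := by
  have hcost : Measurable fun p : E × E => (‖p.1 - p.2‖₊ : ℝ≥0∞) ^ 2 := by fun_prop
  simp only [quadraticCost]
  rw [lintegral_map hcost (by fun_prop), lintegral_map hcost measurable_fst,
    lintegral_map hcost (by fun_prop)]
  simp only [← ENNReal.rpow_two]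
  calc (∫⁻ p, (‖p.1.1 - p.2‖₊ : ℝ≥0∞) ^ (2 : ℝ) ∂m) ^ (1 / 2 : ℝ)
      ≤ (∫⁻ p, ((‖p.1.1 - p.1.2‖₊ : ℝ≥0∞) + ‖p.1.2 - p.2‖₊) ^ (2 : ℝ) ∂m) ^ (1 / 2 : ℝ) := by
        gcongr with p
        exact_mod_cast (sub_add_sub_cancel p.1.1 p.1.2 p.2 ▸ nnnorm_add_le _ _)
    _ ≤ _ := ENNReal.lintegral_Lp_add_le (by fun_prop) (by fun_prop) one_le_two

variable [StandardBorelSpace E]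

theorem exists_coupling_comp_quadraticCost_rpow_le (γ ρ : Measure (E × E))
    [IsProbabilityMeasure γ] [IsFiniteMeasure ρ] (hlink : γ.map Prod.snd = ρ.map Prod.fst) :
    ∃ η : Measure (E × E), IsProbabilityMeasure η ∧ η.map Prod.fst = γ.map Prod.fst ∧
      η.map Prod.snd = ρ.map Prod.snd ∧
      quadraticCost η ^ (1 / 2 : ℝ) ≤
        quadraticCost γ ^ (1 / 2 : ℝ) + quadraticCost ρ ^ (1 / 2 : ℝ) := by
  obtain ⟨m, hm, rfl, rfl⟩ := exists_glue γ ρ hlink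
  refine ⟨m.map fun p => (p.1.1, p.2), Measure.isProbabilityMeasure_map (by fun_prop), ?_, ?_,
    quadraticCost_glue_rpow_le⟩
  · rw [Measure.map_map measurable_fst (by fun_prop),
      Measure.map_map measurable_fst measurable_fst]
    rfl
  · rw [Measure.map_map measurable_snd (by fun_prop), Measure.map_map measurable_snd (by fun_prop)]
    rfl

theorem exists_coupling_quadraticCost_rpow_le_sum :
    ∀ (n : ℕ) (ν : Fin (n + 1) → Measure (E × E)), (∀ i, IsProbabilityMeasure (ν i)) →
    (∀ i : Fin n, (ν i.castSucc).map Prod.snd = (ν i.succ).map Prod.fst) →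
    ∃ η : Measure (E × E), IsProbabilityMeasure η ∧ η.map Prod.fst = (ν 0).map Prod.fst ∧
      η.map Prod.snd = (ν (Fin.last n)).map Prod.snd ∧
      quadraticCost η ^ (1 / 2 : ℝ) ≤ ∑ i, quadraticCost (ν i) ^ (1 / 2 : ℝ)
  | 0, ν, hν, _ => ⟨ν 0, hν 0, rfl, rfl, by simp⟩
  | n + 1, ν, hν, hlink => by
    obtain ⟨η, hη, hfst, hsnd, hle⟩ := exists_coupling_quadraticCost_rpow_le_sum n
      (fun i => ν i.castSucc) (fun i => hν _) (fun i => hlink i.castSucc)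
    obtain ⟨η', hη', hfst', hsnd', hle'⟩ := exists_coupling_comp_quadraticCost_rpow_le η
      (ν (Fin.last (n + 1))) (hsnd.trans (hlink (Fin.last n)))
    refine ⟨η', hη', hfst'.trans hfst, hsnd', hle'.trans ?_⟩
    rw [Fin.sum_univ_castSucc]
    gcongr

end QuadraticCost

section Interpolation

open AffineMap NNReal

variable {E : Type*} [NormedAddCommGroup E] [NormedSpace ℝ E] [MeasurableSpace E] [BorelSpace E]
  [SecondCountableTopology E]

theorem measurable_lineMap_fst_snd (s : ℝ) : Measurable fun p : E × E => lineMap p.1 p.2 s :=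
  (continuous_fst.lineMap continuous_snd continuous_const).measurable

theorem map_fst_map_lineMap (γ : Measure (E × E)) (s t : ℝ) :
    (γ.map fun p => (lineMap p.1 p.2 s, lineMap p.1 p.2 t)).map Prod.fst =
      γ.map fun p => lineMap p.1 p.2 s := by
  rw [Measure.map_map measurable_fst
    ((measurable_lineMap_fst_snd s).prodMk (measurable_lineMap_fst_snd t))]
  rfl

theorem map_snd_map_lineMap (γ : Measure (E × E)) (s t : ℝ) :
    (γ.map fun p => (lineMap p.1 p.2 s, lineMap p.1 p.2 t)).map Prod.snd =
      γ.map fun p => lineMap p.1 p.2 t := by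
  rw [Measure.map_map measurable_snd
    ((measurable_lineMap_fst_snd s).prodMk (measurable_lineMap_fst_snd t))]
  rfl

theorem quadraticCost_map_lineMap (γ : Measure (E × E)) (s t : ℝ) :
    quadraticCost (γ.map fun p => (lineMap p.1 p.2 s, lineMap p.1 p.2 t)) =
      (nndist s t : ℝ≥0∞) ^ 2 * quadraticCost γ := by
  have hcost : Measurable fun p : E × E => (‖p.1 - p.2‖₊ : ℝ≥0∞) ^ 2 := by fun_prop
  rw [quadraticCost, lintegral_map hcost
    ((measurable_lineMap_fst_snd s).prodMk (measurable_lineMap_fst_snd t)),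
    quadraticCost, ← lintegral_const_mul _ hcost]
  congr 1 with p
  rw [← nndist_eq_nnnorm, nndist_lineMap_lineMap, ENNReal.coe_mul, mul_pow,
    nndist_eq_nnnorm p.1 p.2]

noncomputable def interpolatedFamily (H : ℕ) (γ : Measure (E × E)) :
    Fin (H + 1) → Measure (E × E) := fun h =>
  γ.map fun p => (lineMap p.1 p.2 ((h : ℝ) / (H + 1)), lineMap p.1 p.2 (((h : ℝ) + 1) / (H + 1)))

theorem nndist_div_succ_div_succ (h H : ℕ) :
    nndist ((h : ℝ) / (H + 1)) (((h : ℝ) + 1) / (H + 1)) = ((H : ℝ≥0) + 1)⁻¹ := by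
  ext
  rw [coe_nndist, Real.dist_eq, div_sub_div_same, sub_add_cancel_left, abs_div, abs_neg, abs_one,
    abs_of_pos (by positivity)]
  push_cast
  rw [one_div]

theorem sum_quadraticCost_interpolatedFamily (H : ℕ) (γ : Measure (E × E)) :
    ∑ h, quadraticCost (interpolatedFamily H γ h) = ((H : ℝ≥0∞) + 1)⁻¹ * quadraticCost γ := by
  simp only [interpolatedFamily, quadraticCost_map_lineMap, nndist_div_succ_div_succ]
  rw [Finset.sum_const, Finset.card_univ, Fintype.card_fin, nsmul_eq_mul,
    ENNReal.coe_inv (by positivity), sq, ← mul_assoc, ← mul_assoc]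
  push_cast
  rw [ENNReal.mul_inv_cancel (by simp) (by simp), one_mul]

end Interpolation

section DynamicLP

open AffineMap

variable {d H : ℕ} {μsrc μtgt : Measure (EuclideanSpace ℝ (Fin d))}

theorem W2sq_le_LPcost
    {ν : Fin (H + 1) → Measure (EuclideanSpace ℝ (Fin d) × EuclideanSpace ℝ (Fin d))}
    (hν : LPfeasible H μsrc μtgt ν) : W2sq μsrc μtgt ≤ LPcost H ν := by
  obtain ⟨hprob, hsrc, hlink, htgt⟩ := hν
  obtain ⟨η, hη, hfst, hsnd, hle⟩ := exists_coupling_quadraticCost_rpow_le_sum H ν hprob hlink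
  calc W2sq μsrc μtgt ≤ 2⁻¹ * quadraticCost η :=
        iInf₂_le η ⟨hη, hfst.trans hsrc, hsnd.trans htgt⟩
    _ = 2⁻¹ * (quadraticCost η ^ (1 / 2 : ℝ)) ^ (2 : ℝ) := by
        rw [← ENNReal.rpow_mul]; norm_num
    _ ≤ 2⁻¹ * (∑ h, quadraticCost (ν h) ^ (1 / 2 : ℝ)) ^ (2 : ℝ) := by gcongr
    _ ≤ 2⁻¹ * ((Finset.univ.card : ℝ≥0∞) ^ ((2 : ℝ) - 1) *
          ∑ h, (quadraticCost (ν h) ^ (1 / 2 : ℝ)) ^ (2 : ℝ)) := by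
        gcongr
        exact ENNReal.rpow_sum_le_const_mul_sum_rpow _ _ one_le_two
    _ = LPcost H ν := by
        simp only [← ENNReal.rpow_mul, Finset.card_univ, Fintype.card_fin]
        norm_num
        rw [LPcost, ENNReal.div_eq_inv_mul, mul_assoc]
        rfl

theorem LPfeasible_interpolatedFamily
    {γ : Measure (EuclideanSpace ℝ (Fin d) × EuclideanSpace ℝ (Fin d))} [IsProbabilityMeasure γ]
    (hγ1 : γ.map Prod.fst = μsrc) (hγ2 : γ.map Prod.snd = μtgt) :
    LPfeasible H μsrc μtgt (interpolatedFamily H γ) := by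
  refine ⟨fun h => Measure.isProbabilityMeasure_map ?_, ?_, fun h => ?_, ?_⟩
  · exact ((measurable_lineMap_fst_snd _).prodMk (measurable_lineMap_fst_snd _)).aemeasurable
  · rw [interpolatedFamily, map_fst_map_lineMap, Fin.val_zero, Nat.cast_zero, zero_div]
    simpa only [lineMap_apply_zero] using hγ1
  · rw [interpolatedFamily, interpolatedFamily, map_snd_map_lineMap, map_fst_map_lineMap,
      Fin.val_castSucc, Fin.val_succ, Nat.cast_succ]
  · rw [interpolatedFamily, map_snd_map_lineMap, Fin.val_last, div_self (by positivity)]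
    simpa only [lineMap_apply_one] using hγ2

theorem LPcost_interpolatedFamily
    (γ : Measure (EuclideanSpace ℝ (Fin d) × EuclideanSpace ℝ (Fin d))) :
    LPcost H (interpolatedFamily H γ) = 2⁻¹ * quadraticCost γ := by
  rw [LPcost]
  change _ * ∑ h, quadraticCost _ = _
  rw [sum_quadraticCost_interpolatedFamily, div_eq_mul_inv, mul_comm _ 2⁻¹, mul_assoc,
    ← mul_assoc _ _⁻¹, ENNReal.mul_inv_cancel (by simp) (by simp), one_mul]

end DynamicLP

theorem stmt1_general {d : ℕ} (H : ℕ)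
    (μsrc μtgt : Measure (EuclideanSpace ℝ (Fin d)))
    (γ : Measure (EuclideanSpace ℝ (Fin d) × EuclideanSpace ℝ (Fin d)))
    [IsProbabilityMeasure γ]
    (hγ1 : γ.map Prod.fst = μsrc) (hγ2 : γ.map Prod.snd = μtgt)
    (hγopt : 2⁻¹ * ∫⁻ p, (‖p.1 - p.2‖₊ : ℝ≥0∞) ^ 2 ∂γ = W2sq μsrc μtgt)
    (μstar : Fin (H + 1) → Measure (EuclideanSpace ℝ (Fin d) × EuclideanSpace ℝ (Fin d)))
    (hμstar : ∀ h : Fin (H + 1), μstar h =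
      γ.map (fun p =>
        (p.1 + ((h.val : ℝ) / ((H : ℝ) + 1)) • (p.2 - p.1),
         p.1 + (((h.val : ℝ) + 1) / ((H : ℝ) + 1)) • (p.2 - p.1)))) :
    LPfeasible H μsrc μtgt μstar ∧
    LPcost H μstar = W2sq μsrc μtgt ∧
    ∀ ν, LPfeasible H μsrc μtgt ν → LPcost H μstar ≤ LPcost H ν := by
  obtain rfl : μstar = interpolatedFamily H γ := by
    funext h
    simp only [hμstar, interpolatedFamily, AffineMap.lineMap_apply_module',
      add_comm _ (Prod.fst _)]
  have hcost : LPcost H (interpolatedFamily H γ) = W2sq μsrc μtgt :=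
    (LPcost_interpolatedFamily γ).trans hγopt
  exact ⟨LPfeasible_interpolatedFamily hγ1 hγ2, hcost, fun ν hν => hcost ▸ W2sq_le_LPcost hν⟩

/-- the linear interpolation of an optimal static coupling is an optimal
solution of the dynamic primal LP, with cost `W₂²(μsrc, μtgt)`. -/
theorem stmt1 {d : ℕ} (hd : 1 ≤ d) (H : ℕ)
    (μsrc μtgt : Measure (EuclideanSpace ℝ (Fin d)))
    [IsProbabilityMeasure μsrc] [IsProbabilityMeasure μtgt]
    (h2src : ∫⁻ x, (‖x‖₊ : ℝ≥0∞) ^ 2 ∂μsrc ≠ ⊤)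
    (h2tgt : ∫⁻ x, (‖x‖₊ : ℝ≥0∞) ^ 2 ∂μtgt ≠ ⊤)
    (γ : Measure (EuclideanSpace ℝ (Fin d) × EuclideanSpace ℝ (Fin d)))
    [IsProbabilityMeasure γ]
    (hγ1 : γ.map Prod.fst = μsrc) (hγ2 : γ.map Prod.snd = μtgt)
    (hγopt : 2⁻¹ * ∫⁻ p, (‖p.1 - p.2‖₊ : ℝ≥0∞) ^ 2 ∂γ = W2sq μsrc μtgt)
    (μstar : Fin (H + 1) → Measure (EuclideanSpace ℝ (Fin d) × EuclideanSpace ℝ (Fin d)))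
    (hμstar : ∀ h : Fin (H + 1), μstar h =
      γ.map (fun p =>
        (p.1 + ((h.val : ℝ) / ((H : ℝ) + 1)) • (p.2 - p.1),
         p.1 + (((h.val : ℝ) + 1) / ((H : ℝ) + 1)) • (p.2 - p.1)))) :
    LPfeasible H μsrc μtgt μstar ∧
    LPcost H μstar = W2sq μsrc μtgt ∧
    ∀ ν, LPfeasible H μsrc μtgt ν → LPcost H μstar ≤ LPcost H ν :=
  stmt1_general H μsrc μtgt γ hγ1 hγ2 hγopt μstar hμstar
end

section
/- Let d ≥ 1, H ∈ ℕ, and let μ_src and μ_tgt be Borel probability measures on ℝ^d with finite second moments. Let π_0,…,π_H : ℝ^d → ℝ^d be measurable maps that are feasible for transporting μ_src to μ_tgt, i.e. (π̄_H)_# μ_src = μ_tgt where π̄_h := π_h ∘ ⋯ ∘ π_0. Then the dynamic cost ((H+1)/2)·Σ_{h=0}^{H} ∫ ‖π̄_h(x) − π̄_{h−1}(x)‖² dμ_src(x) (with π̄_{−1} := id) is at least W₂²(μ_src, μ_tgt). -/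
open MeasureTheory ENNReal

/-- `trajComp π h = π̄_{h-1} = π_{h-1} ∘ ⋯ ∘ π_0`, with `trajComp π 0 = π̄_{-1} = id`. -/
def trajComp {α : Type*} (π : ℕ → α → α) : ℕ → α → α
  | 0 => id
  | n + 1 => π n ∘ trajComp π n

lemma ENNReal.sq_sum_le_card_mul_sum_sq {ι : Type*} (s : Finset ι) (f : ι → ℝ≥0∞) :
    (∑ i ∈ s, f i) ^ 2 ≤ s.card * ∑ i ∈ s, f i ^ 2 := by
  have h := ENNReal.rpow_sum_le_const_mul_sum_rpow (p := 2) s f one_le_two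
  norm_num at h
  exact h

lemma W2sq_le_of_map_eq {d : ℕ} {μ ν : Measure (EuclideanSpace ℝ (Fin d))}
    [IsProbabilityMeasure μ] {T : EuclideanSpace ℝ (Fin d) → EuclideanSpace ℝ (Fin d)}
    (hT : Measurable T) (hν : μ.map T = ν) :
    W2sq μ ν ≤ 2⁻¹ * ∫⁻ x, (‖T x - x‖₊ : ℝ≥0∞) ^ 2 ∂μ := by
  have hgraph : Measurable fun x => (x, T x) := measurable_id.prodMk hT
  have hcost : Measurable fun p : EuclideanSpace ℝ (Fin d) × EuclideanSpace ℝ (Fin d) =>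
      (‖p.1 - p.2‖₊ : ℝ≥0∞) ^ 2 :=
    (measurable_fst.sub measurable_snd).enorm.pow_const 2
  have hcoupling : IsProbabilityMeasure (μ.map fun x => (x, T x)) ∧
      (μ.map fun x => (x, T x)).map Prod.fst = μ ∧
      (μ.map fun x => (x, T x)).map Prod.snd = ν := by
    refine ⟨Measure.isProbabilityMeasure_map hgraph.aemeasurable, ?_, ?_⟩
    · rw [Measure.map_map measurable_fst hgraph]
      exact Measure.map_id
    · rwa [Measure.map_map measurable_snd hgraph]
  calc W2sq μ ν ≤ 2⁻¹ * ∫⁻ p, (‖p.1 - p.2‖₊ : ℝ≥0∞) ^ 2 ∂(μ.map fun x => (x, T x)) :=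
        iInf₂_le (μ.map fun x => (x, T x)) hcoupling
    _ = 2⁻¹ * ∫⁻ x, (‖T x - x‖₊ : ℝ≥0∞) ^ 2 ∂μ := by
        rw [lintegral_map hcost hgraph]
        congr 1
        exact lintegral_congr fun x => by rw [← nnnorm_neg, neg_sub]

lemma measurable_trajComp {α : Type*} [MeasurableSpace α] {π : ℕ → α → α} {n : ℕ}
    (hπ : ∀ k < n, Measurable (π k)) : Measurable (trajComp π n) := by
  induction n with
  | zero => exact measurable_id
  | succ k ih => exact (hπ k k.lt_succ_self).comp (ih fun j hj => hπ j (hj.trans k.lt_succ_self))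

section Increments

variable {E : Type*} [SeminormedAddCommGroup E]

lemma sq_nnnorm_sub_le_mul_sum_sq_nnnorm_sub (u : ℕ → E) (n : ℕ) :
    (‖u n - u 0‖₊ : ℝ≥0∞) ^ 2 ≤ n * ∑ h ∈ Finset.range n, (‖u (h + 1) - u h‖₊ : ℝ≥0∞) ^ 2 := by
  have htriangle : (‖u n - u 0‖₊ : ℝ≥0∞) ≤ ∑ h ∈ Finset.range n, (‖u (h + 1) - u h‖₊ : ℝ≥0∞) := by
    rw [← Finset.sum_range_sub u n]
    exact_mod_cast nnnorm_sum_le _ _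
  calc (‖u n - u 0‖₊ : ℝ≥0∞) ^ 2
      ≤ (∑ h ∈ Finset.range n, (‖u (h + 1) - u h‖₊ : ℝ≥0∞)) ^ 2 := by gcongr
    _ ≤ n * ∑ h ∈ Finset.range n, (‖u (h + 1) - u h‖₊ : ℝ≥0∞) ^ 2 := by
        simpa using ENNReal.sq_sum_le_card_mul_sum_sq (Finset.range n) _

variable [MeasurableSpace E] [OpensMeasurableSpace E] [MeasurableSub₂ E]

lemma lintegral_sq_nnnorm_sub_le_mul_sum {α : Type*} [MeasurableSpace α] {μ : Measure α}
    {u : ℕ → α → E} {n : ℕ} (hu : ∀ h ≤ n, Measurable (u h)) :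
    ∫⁻ x, (‖u n x - u 0 x‖₊ : ℝ≥0∞) ^ 2 ∂μ ≤
      n * ∑ h ∈ Finset.range n, ∫⁻ x, (‖u (h + 1) x - u h x‖₊ : ℝ≥0∞) ^ 2 ∂μ := by
  have hincr : ∀ h ∈ Finset.range n,
      Measurable fun x => (‖u (h + 1) x - u h x‖₊ : ℝ≥0∞) ^ 2 := fun h hh => by
    have hh : h < n := Finset.mem_range.mp hh
    exact ((hu (h + 1) hh).sub (hu h hh.le)).enorm.pow_const 2
  calc ∫⁻ x, (‖u n x - u 0 x‖₊ : ℝ≥0∞) ^ 2 ∂μ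
      ≤ ∫⁻ x, n * ∑ h ∈ Finset.range n, (‖u (h + 1) x - u h x‖₊ : ℝ≥0∞) ^ 2 ∂μ :=
        lintegral_mono fun x => sq_nnnorm_sub_le_mul_sum_sq_nnnorm_sub (u · x) n
    _ = n * ∑ h ∈ Finset.range n, ∫⁻ x, (‖u (h + 1) x - u h x‖₊ : ℝ≥0∞) ^ 2 ∂μ := by
        rw [lintegral_const_mul' _ _ (natCast_ne_top n), lintegral_finsetSum _ hincr]

end Increments

theorem stmt4_general {d : ℕ} (H : ℕ)
    (μsrc μtgt : Measure (EuclideanSpace ℝ (Fin d)))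
    [IsProbabilityMeasure μsrc]
    (π : ℕ → EuclideanSpace ℝ (Fin d) → EuclideanSpace ℝ (Fin d))
    (hmeas : ∀ h ≤ H, Measurable (π h))
    (hfeas : μsrc.map (trajComp π (H + 1)) = μtgt) :
    ((H : ℝ≥0∞) + 1) / 2 *
        ∑ h ∈ Finset.range (H + 1),
          ∫⁻ x, (‖trajComp π (h + 1) x - trajComp π h x‖₊ : ℝ≥0∞) ^ 2 ∂μsrc ≥
      W2sq μsrc μtgt := by
  have htraj : ∀ n ≤ H + 1, Measurable (trajComp π n) := fun n hn =>
    measurable_trajComp fun k hk => hmeas k (by omega)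
  calc W2sq μsrc μtgt
      ≤ 2⁻¹ * ∫⁻ x, (‖trajComp π (H + 1) x - x‖₊ : ℝ≥0∞) ^ 2 ∂μsrc :=
        W2sq_le_of_map_eq (htraj (H + 1) le_rfl) hfeas
    _ ≤ 2⁻¹ * (((H + 1 : ℕ) : ℝ≥0∞) * ∑ h ∈ Finset.range (H + 1),
          ∫⁻ x, (‖trajComp π (h + 1) x - trajComp π h x‖₊ : ℝ≥0∞) ^ 2 ∂μsrc) := by
        gcongr
        exact lintegral_sq_nnnorm_sub_le_mul_sum (u := trajComp π) htraj
    _ = _ := by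
        rw [ENNReal.div_eq_inv_mul]
        push_cast
        ring

/-- any feasible policy `(π_0,…,π_H)` transporting `μsrc` to `μtgt` has dynamic
cost `((H+1)/2) Σ_{h=0}^{H} ∫ ‖π̄_h(x) − π̄_{h−1}(x)‖² dμsrc(x)` at least `W₂²(μsrc, μtgt)`. -/
theorem stmt4 {d : ℕ} (hd : 1 ≤ d) (H : ℕ)
    (μsrc μtgt : Measure (EuclideanSpace ℝ (Fin d)))
    [IsProbabilityMeasure μsrc] [IsProbabilityMeasure μtgt]
    (h2src : ∫⁻ x, (‖x‖₊ : ℝ≥0∞) ^ 2 ∂μsrc ≠ ⊤)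
    (h2tgt : ∫⁻ x, (‖x‖₊ : ℝ≥0∞) ^ 2 ∂μtgt ≠ ⊤)
    (π : ℕ → EuclideanSpace ℝ (Fin d) → EuclideanSpace ℝ (Fin d))
    (hmeas : ∀ h ≤ H, Measurable (π h))
    (hfeas : μsrc.map (trajComp π (H + 1)) = μtgt) :
    ((H : ℝ≥0∞) + 1) / 2 *
        ∑ h ∈ Finset.range (H + 1),
          ∫⁻ x, (‖trajComp π (h + 1) x - trajComp π h x‖₊ : ℝ≥0∞) ^ 2 ∂μsrc ≥
      W2sq μsrc μtgt :=
  stmt4_general H μsrc μtgt π hmeas hfeas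
end

section
/- Let d ≥ 1, H ∈ ℕ, and let μ_src and μ_tgt be Borel probability measures on ℝ^d with finite second moments. Suppose there exists a measurable map M⋆ : ℝ^d → ℝ^d with (M⋆)_# μ_src = μ_tgt and ½∫‖M⋆(x) − x‖² dμ_src(x) = W₂²(μ_src, μ_tgt) (an optimal Monge map). Then there exist measurable maps π⋆_0,…,π⋆_H : ℝ^d → ℝ^d that are feasible for transporting μ_src to μ_tgt and whose dynamic cost equals W₂²(μ_src, μ_tgt); moreover these maps may be chosen so that π̄⋆_h(x) = x + ((h+1)/(H+1))·(M⋆(x) − x) for μ_src-almost every x and every h ∈ {0,…,H}. -/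
/-!
An optimal Monge map `M` is monotone on a set `A` of full `μsrc`-measure:
`⟪x - y, M x - M y⟫ ≥ 0` for `x, y ∈ A`. Indeed, by
`‖x - M y‖² + ‖y - M x‖² = ‖x - M x‖² + ‖y - M y‖² + 2 ⟪x - y, M x - M y⟫`,
if this inner product were negative at two points of the support of the coupling
`(id, M)_# μsrc`, swapping the targets of small neighbourhoods of them would produce a
coupling of strictly smaller cost. Monotonicity makes `x ↦ x + t • (M x - x)` injective on `A`
for `0 ≤ t < 1`, and an injective measurable map on a standard Borel space has a measurable
left inverse, so the step from time `h/(H+1)` to `(h+1)/(H+1)` is a measurable map `π h`.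
Each step moves `x` by `(M x - x)/(H+1)`, so the `H+1` steps cost `(H+1)⁻¹ ∫ ‖M x - x‖²` in
total, and the dynamic cost is `½ ∫ ‖M x - x‖² = W₂²`.
-/

open MeasureTheory ENNReal

open scoped RealInnerProductSpace
open Set

theorem enorm_sub_sq_le {F : Type*} [NormedAddCommGroup F] (a b : F) :
    ‖a - b‖ₑ ^ 2 ≤ 2 * (‖a‖ₑ ^ 2 + ‖b‖ₑ ^ 2) := by
  simp only [enorm_eq_nnnorm]
  exact_mod_cast (pow_le_pow_left₀ zero_le (nnnorm_sub_le a b) 2).trans add_sq_le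

theorem lintegral_enorm_sub_sq_ne_top {α F : Type*} [MeasurableSpace α] [NormedAddCommGroup F]
    [MeasurableSpace F] [OpensMeasurableSpace F] {μ : Measure α} {f g : α → F}
    (hf : AEMeasurable f μ) (hf2 : ∫⁻ x, ‖f x‖ₑ ^ 2 ∂μ ≠ ⊤) (hg2 : ∫⁻ x, ‖g x‖ₑ ^ 2 ∂μ ≠ ⊤) :
    ∫⁻ x, ‖f x - g x‖ₑ ^ 2 ∂μ ≠ ⊤ := by
  refine ne_top_of_le_ne_top ?_ (lintegral_mono fun x => enorm_sub_sq_le (f x) (g x))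
  rw [lintegral_const_mul' _ _ ofNat_ne_top, lintegral_add_left' (hf.enorm.pow_const 2)]
  exact mul_ne_top ofNat_ne_top (add_ne_top.2 ⟨hf2, hg2⟩)

theorem le_lintegral_of_eq_W2sq {d : ℕ} {μ ν : Measure (EuclideanSpace ℝ (Fin d))} {C : ℝ≥0∞}
    (hC : 2⁻¹ * C = W2sq μ ν)
    (γ : Measure (EuclideanSpace ℝ (Fin d) × EuclideanSpace ℝ (Fin d))) [IsProbabilityMeasure γ]
    (hfst : γ.map Prod.fst = μ) (hsnd : γ.map Prod.snd = ν) :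
    C ≤ ∫⁻ p, ‖p.1 - p.2‖ₑ ^ 2 ∂γ := by
  rw [← ENNReal.mul_le_mul_iff_right (by norm_num : (2⁻¹ : ℝ≥0∞) ≠ 0) (by norm_num), hC]
  simp only [enorm_eq_nnnorm]
  exact iInf₂_le γ ⟨‹_›, hfst, hsnd⟩

theorem MeasureTheory.Measure.map_sub_add_of_le {α β : Type*} [MeasurableSpace α]
    [MeasurableSpace β]
    {γ κ κ' : Measure α} [IsFiniteMeasure κ] (hκγ : κ ≤ γ) {f : α → β} (hf : Measurable f)
    (h : κ.map f = κ'.map f) : (γ - κ + κ').map f = γ.map f := by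
  rw [Measure.map_add _ _ hf, ← h, ← Measure.map_add _ _ hf, Measure.sub_add_cancel_of_le hκγ]

theorem exists_coupling_lintegral_lt {X Y : Type*} [MeasurableSpace X] [MeasurableSpace Y]
    {γ κ κ' : Measure (X × Y)} [IsProbabilityMeasure γ] {c : X × Y → ℝ≥0∞}
    (hκγ : κ ≤ γ) (hfst : κ.map Prod.fst = κ'.map Prod.fst)
    (hsnd : κ.map Prod.snd = κ'.map Prod.snd)
    (hγc : ∫⁻ p, c p ∂γ ≠ ⊤) (hlt : ∫⁻ p, c p ∂κ' < ∫⁻ p, c p ∂κ) :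
    ∃ γ' : Measure (X × Y), IsProbabilityMeasure γ' ∧ γ'.map Prod.fst = γ.map Prod.fst ∧
      γ'.map Prod.snd = γ.map Prod.snd ∧ ∫⁻ p, c p ∂γ' < ∫⁻ p, c p ∂γ := by
  have := isFiniteMeasure_of_le γ hκγ
  have hγ'fst := Measure.map_sub_add_of_le hκγ measurable_fst hfst
  refine ⟨γ - κ + κ', ⟨?_⟩, hγ'fst, Measure.map_sub_add_of_le hκγ measurable_snd hsnd, ?_⟩
  · simpa [Measure.map_apply measurable_fst MeasurableSet.univ] using congrArg (· univ) hγ'fst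
  calc ∫⁻ p, c p ∂(γ - κ + κ') = ∫⁻ p, c p ∂(γ - κ) + ∫⁻ p, c p ∂κ' := lintegral_add_measure ..
    _ < ∫⁻ p, c p ∂(γ - κ) + ∫⁻ p, c p ∂κ :=
      ENNReal.add_lt_add_left (ne_top_of_le_ne_top hγc (lintegral_mono' Measure.sub_le le_rfl)) hlt
    _ = ∫⁻ p, c p ∂γ := by rw [← lintegral_add_measure, Measure.sub_add_cancel_of_le hκγ]

section Exchange

variable {X Y : Type*} [MeasurableSpace X] [MeasurableSpace Y]

namespace MeasureTheory.Measure

noncomputable def exchange (ρ : Measure ((X × Y) × (X × Y))) : Measure (X × Y) :=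
  ρ.map (fun z => (z.1.1, z.2.2)) + ρ.map (fun z => (z.2.1, z.1.2))

theorem map_fst_exchange (ρ : Measure ((X × Y) × (X × Y))) :
    ρ.exchange.map Prod.fst = (ρ.map Prod.fst + ρ.map Prod.snd).map Prod.fst := by
  simp only [exchange, Measure.map_add _ _ measurable_fst]
  rw [map_map measurable_fst (by fun_prop), map_map measurable_fst (by fun_prop),
    map_map measurable_fst measurable_fst, map_map measurable_fst measurable_snd]
  rfl

theorem map_snd_exchange (ρ : Measure ((X × Y) × (X × Y))) :
    ρ.exchange.map Prod.snd = (ρ.map Prod.fst + ρ.map Prod.snd).map Prod.snd := by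
  simp only [exchange, Measure.map_add _ _ measurable_snd]
  rw [map_map measurable_snd (by fun_prop), map_map measurable_snd (by fun_prop),
    map_map measurable_snd measurable_fst, map_map measurable_snd measurable_snd]
  exact add_comm _ _

end MeasureTheory.Measure

end Exchange

section Interpolant

variable {E : Type*} [NormedAddCommGroup E] [NormedSpace ℝ E]

def interpolant (M : E → E) (t : ℝ) (x : E) : E := x + t • (M x - x)

theorem interpolant_sub_interpolant (M : E → E) (s t : ℝ) (x : E) :
    interpolant M t x - interpolant M s x = (t - s) • (M x - x) := by
  simp only [interpolant, sub_smul]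
  abel

theorem measurable_interpolant [MeasurableSpace E] [BorelSpace E] [SecondCountableTopology E]
    {M : E → E} (hM : Measurable M) (t : ℝ) : Measurable (interpolant M t) := by
  unfold interpolant
  fun_prop

theorem dynamicCost_interpolant [MeasurableSpace E] (μ : Measure E) (M : E → E) (H : ℕ) :
    ((H : ℝ≥0∞) + 1) / 2 * ∑ h ∈ Finset.range (H + 1),
      ∫⁻ x, ‖interpolant M (((h : ℝ) + 1) / ((H : ℝ) + 1)) x -
        interpolant M ((h : ℝ) / ((H : ℝ) + 1)) x‖ₑ ^ 2 ∂μ =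
    2⁻¹ * ∫⁻ x, ‖M x - x‖ₑ ^ 2 ∂μ := by
  set N : ℝ≥0∞ := (H : ℝ≥0∞) + 1
  have hN0 : N ≠ 0 := by positivity
  have hNtop : N ≠ ⊤ := by simp [N]
  have hN : ‖((H : ℝ) + 1)⁻¹‖ₑ = N⁻¹ := by
    rw [enorm_inv (by positivity)]
    congr 1
    simpa [N] using Real.enorm_natCast (H + 1)
  have hstep (h : ℕ) :
      ((h : ℝ) + 1) / ((H : ℝ) + 1) - (h : ℝ) / ((H : ℝ) + 1) = ((H : ℝ) + 1)⁻¹ := by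
    field_simp
    ring
  simp_rw [interpolant_sub_interpolant, hstep, enorm_smul, hN, mul_pow]
  rw [lintegral_const_mul' _ _ (pow_ne_top (inv_ne_top.2 hN0)), Finset.sum_const,
    Finset.card_range, nsmul_eq_mul, show ((H + 1 : ℕ) : ℝ≥0∞) = N by push_cast; rfl]
  calc N / 2 * (N * (N⁻¹ ^ 2 * ∫⁻ x, ‖M x - x‖ₑ ^ 2 ∂μ))
      = (N * N⁻¹) * (N * N⁻¹) * (2⁻¹ * ∫⁻ x, ‖M x - x‖ₑ ^ 2 ∂μ) := by
        rw [div_eq_mul_inv]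
        ring
    _ = 2⁻¹ * ∫⁻ x, ‖M x - x‖ₑ ^ 2 ∂μ := by rw [ENNReal.mul_inv_cancel hN0 hNtop, one_mul, one_mul]

end Interpolant

section InnerProductSpace

variable {E : Type*} [NormedAddCommGroup E] [InnerProductSpace ℝ E]

theorem enorm_sub_sq_add_enorm_sub_sq_lt {x x' y y' : E} (h : ⟪x - x', y - y'⟫ < 0) :
    ‖x - y'‖ₑ ^ 2 + ‖x' - y‖ₑ ^ 2 < ‖x - y‖ₑ ^ 2 + ‖x' - y'‖ₑ ^ 2 := by
  have key : ‖x - y'‖ ^ 2 + ‖x' - y‖ ^ 2 =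
      ‖x - y‖ ^ 2 + ‖x' - y'‖ ^ 2 + 2 * ⟪x - x', y - y'⟫ := by
    simp only [norm_sub_sq_real, inner_sub_left, inner_sub_right]
    ring
  simp only [← ofReal_norm, ← ENNReal.ofReal_pow (norm_nonneg _)]
  rw [← ENNReal.ofReal_add (by positivity) (by positivity),
    ← ENNReal.ofReal_add (by positivity) (by positivity),
    ENNReal.ofReal_lt_ofReal_iff_of_nonneg (by positivity)]
  linarith

theorem injOn_interpolant {M : E → E} {A : Set E}
    (hM : ∀ x ∈ A, ∀ y ∈ A, 0 ≤ ⟪x - y, M x - M y⟫) {t : ℝ} (ht0 : 0 ≤ t) (ht1 : t < 1) :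
    InjOn (interpolant M t) A := by
  intro x hx y hy hxy
  have h0 : (1 - t) • (x - y) + t • (M x - M y) = 0 := by
    rw [← sub_eq_zero.2 hxy]
    simp only [interpolant, smul_sub, sub_smul, one_smul]
    abel
  have h1 : (1 - t) * ‖x - y‖ ^ 2 + t * ⟪x - y, M x - M y⟫ = 0 := by
    simpa [inner_add_right, inner_smul_right, real_inner_self_eq_norm_sq] using
      congrArg (⟪x - y, ·⟫) h0
  have : ‖x - y‖ ^ 2 = 0 := by nlinarith [hM x hx y hy, sq_nonneg ‖x - y‖]
  simpa [sub_eq_zero] using this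

end InnerProductSpace

section Borel

variable {E : Type*} [NormedAddCommGroup E] [InnerProductSpace ℝ E] [MeasurableSpace E]
  [BorelSpace E] [SecondCountableTopology E]

theorem inner_nonneg_of_optimal_coupling {γ : Measure (E × E)} [IsProbabilityMeasure γ]
    (hγc : ∫⁻ p, ‖p.1 - p.2‖ₑ ^ 2 ∂γ ≠ ⊤)
    (hopt : ∀ γ' : Measure (E × E), IsProbabilityMeasure γ' → γ'.map Prod.fst = γ.map Prod.fst →
      γ'.map Prod.snd = γ.map Prod.snd → ∫⁻ p, ‖p.1 - p.2‖ₑ ^ 2 ∂γ ≤ ∫⁻ p, ‖p.1 - p.2‖ₑ ^ 2 ∂γ')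
    {p q : E × E} (hp : p ∈ γ.everywherePosSubset univ) (hq : q ∈ γ.everywherePosSubset univ) :
    0 ≤ ⟪p.1 - q.1, p.2 - q.2⟫ := by
  by_contra! hneg
  set c : E × E → ℝ≥0∞ := fun p => ‖p.1 - p.2‖ₑ ^ 2
  have hc : Measurable c := by fun_prop
  obtain ⟨U, V, hUo, hpU, hVo, hqV, hUV⟩ := mem_nhds_prod_iff'.1 <|
    (isOpen_lt (by fun_prop) continuous_const).mem_nhds
      (show (p, q) ∈ {z : (E × E) × (E × E) | ⟪z.1.1 - z.2.1, z.1.2 - z.2.2⟫ < 0} from hneg)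
  -- Half of the mass of `γ` near `p` and near `q` is rerouted along the swapped pairs.
  set ρ := (2⁻¹ : ℝ≥0∞) • (γ.prod γ).restrict (U ×ˢ V)
  have hρ : ρ ≠ 0 := by
    rw [← Measure.measure_univ_ne_zero, Measure.smul_apply, Measure.restrict_apply_univ,
      Measure.prod_prod, smul_eq_mul]
    refine mul_ne_zero (by norm_num) (mul_ne_zero (hp.2 U ?_).ne' (hq.2 V ?_).ne') <;>
      simpa only [nhdsWithin_univ] using (IsOpen.mem_nhds ‹_› ‹_›)
  have hhalf {f : (E × E) × (E × E) → E × E} (hf : Measurable f)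
      (hfγ : (γ.prod γ).map f = γ) : ρ.map f ≤ (2⁻¹ : ℝ≥0∞) • γ := by
    calc ρ.map f = (2⁻¹ : ℝ≥0∞) • ((γ.prod γ).restrict (U ×ˢ V)).map f := Measure.map_smul ..
      _ ≤ (2⁻¹ : ℝ≥0∞) • (γ.prod γ).map f := by
        gcongr
        exact Measure.restrict_le_self
      _ = (2⁻¹ : ℝ≥0∞) • γ := by rw [hfγ]
  have hκ : ρ.map Prod.fst + ρ.map Prod.snd ≤ γ := by
    calc ρ.map Prod.fst + ρ.map Prod.snd ≤ (2⁻¹ : ℝ≥0∞) • γ + (2⁻¹ : ℝ≥0∞) • γ :=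
          add_le_add (hhalf measurable_fst (by simp)) (hhalf measurable_snd (by simp))
      _ = γ := by rw [← add_smul, ENNReal.inv_two_add_inv_two, one_smul]
  have hcost {f g : (E × E) × (E × E) → E × E} (hf : Measurable f) (hg : Measurable g) :
      ∫⁻ p, c p ∂(ρ.map f + ρ.map g) = ∫⁻ z, c (f z) + c (g z) ∂ρ := by
    rw [lintegral_add_measure, lintegral_map hc hf, lintegral_map hc hg]
    exact (lintegral_add_left (hc.comp hf) _).symm
  have hswap : ∀ᵐ z ∂ρ, c (z.1.1, z.2.2) + c (z.2.1, z.1.2) < c z.1 + c z.2 := by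
    filter_upwards [Measure.ae_smul_measure (ae_restrict_mem (hUo.prod hVo).measurableSet) _]
      with z hz using enorm_sub_sq_add_enorm_sub_sq_lt (hUV hz)
  have hκc : ∫⁻ z, c z.1 + c z.2 ∂ρ ≠ ⊤ := by
    rw [← hcost measurable_fst measurable_snd]
    exact ne_top_of_le_ne_top hγc (lintegral_mono' hκ le_rfl)
  have hlt : ∫⁻ p, c p ∂ρ.exchange < ∫⁻ p, c p ∂(ρ.map Prod.fst + ρ.map Prod.snd) := by
    rw [Measure.exchange, hcost (by fun_prop) (by fun_prop), hcost measurable_fst measurable_snd]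
    exact lintegral_strict_mono hρ (by fun_prop)
      (ne_top_of_le_ne_top hκc (lintegral_mono_ae (hswap.mono fun _ h => h.le))) hswap
  obtain ⟨γ', hγ', hγ'fst, hγ'snd, hγ'c⟩ := exists_coupling_lintegral_lt hκ
    ρ.map_fst_exchange.symm ρ.map_snd_exchange.symm hγc hlt
  exact (hopt γ' hγ' hγ'fst hγ'snd).not_gt hγ'c

theorem exists_ae_inner_nonneg_of_optimal_map [CompleteSpace E] {μ : Measure E}
    [IsProbabilityMeasure μ] {M : E → E} (hM : Measurable M) (hMc : ∫⁻ x, ‖M x - x‖ₑ ^ 2 ∂μ ≠ ⊤)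
    (hopt : ∀ γ : Measure (E × E), IsProbabilityMeasure γ → γ.map Prod.fst = μ →
      γ.map Prod.snd = μ.map M → ∫⁻ x, ‖M x - x‖ₑ ^ 2 ∂μ ≤ ∫⁻ p, ‖p.1 - p.2‖ₑ ^ 2 ∂γ) :
    ∃ A : Set E, MeasurableSet A ∧ (∀ᵐ x ∂μ, x ∈ A) ∧
      ∀ x ∈ A, ∀ y ∈ A, 0 ≤ ⟪x - y, M x - M y⟫ := by
  set G : E → E × E := fun x => (x, M x)
  have hG : Measurable G := by fun_prop
  set γ := μ.map G
  have : IsProbabilityMeasure γ := Measure.isProbabilityMeasure_map hG.aemeasurable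
  have hγc : ∫⁻ p, ‖p.1 - p.2‖ₑ ^ 2 ∂γ = ∫⁻ x, ‖M x - x‖ₑ ^ 2 ∂μ := by
    rw [lintegral_map (by fun_prop) hG]
    simp_rw [G, enorm_sub_rev]
  have hfst : γ.map Prod.fst = μ := by
    rw [Measure.map_map measurable_fst hG]
    exact Measure.map_id
  have hsnd : γ.map Prod.snd = μ.map M := Measure.map_map measurable_snd hG
  have hK : ∀ᵐ p ∂γ, p ∈ γ.everywherePosSubset univ :=
    mem_ae_iff.2 (ae_eq_univ.1 (Measure.everywherePosSubset_ae_eq MeasurableSet.univ))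
  refine ⟨G ⁻¹' γ.everywherePosSubset univ, hG MeasurableSet.univ.everywherePosSubset,
    ae_of_ae_map hG.aemeasurable hK, fun x hx y hy => ?_⟩
  exact inner_nonneg_of_optimal_coupling (hγc ▸ hMc)
    (fun γ' hγ' h₁ h₂ => hγc ▸ hopt γ' hγ' (h₁.trans hfst) (h₂.trans hsnd)) hx hy

end Borel

theorem exists_measurable_comp_eqOn {α β : Type*} [MeasurableSpace α] [StandardBorelSpace α]
    [MeasurableSpace β] [MeasurableSpace.CountablySeparated β] {A : Set α} (hA : MeasurableSet A)
    {f g : α → β} (hf : Measurable f) (hg : Measurable g) (hinj : InjOn f A) :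
    ∃ π : β → β, Measurable π ∧ ∀ x ∈ A, π (f x) = g x := by
  have := hA.standardBorel
  have he : MeasurableEmbedding (A.domRestrict f) :=
    (hf.comp measurable_subtype_coe).measurableEmbedding hinj.injective
  exact ⟨Function.extend (A.domRestrict f) (A.domRestrict g) id,
    he.measurable_extend (hg.comp measurable_subtype_coe) measurable_id,
    fun x hx => he.injective.extend_apply _ _ ⟨x, hx⟩⟩

theorem trajComp_eqOn {α : Type*} {π S : ℕ → α → α} {A : Set α} {n : ℕ}
    (h0 : ∀ x ∈ A, S 0 x = x) (hstep : ∀ h < n, ∀ x ∈ A, π h (S h x) = S (h + 1) x) :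
    ∀ h ≤ n, ∀ x ∈ A, trajComp π h x = S h x := by
  intro h
  induction h with
  | zero => exact fun _ x hx => (h0 x hx).symm
  | succ h ih =>
    intro hh x hx
    rw [trajComp, Function.comp_apply, ih (by omega) x hx, hstep h hh x hx]

theorem exists_measurable_trajComp_eqOn {α : Type*} [MeasurableSpace α] [StandardBorelSpace α]
    {A : Set α} (hA : MeasurableSet A) {S : ℕ → α → α} (hS : ∀ h, Measurable (S h))
    (hS0 : ∀ x ∈ A, S 0 x = x) {n : ℕ} (hinj : ∀ h < n, InjOn (S h) A) :
    ∃ π : ℕ → α → α, (∀ h, Measurable (π h)) ∧ ∀ h ≤ n, ∀ x ∈ A, trajComp π h x = S h x := by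
  have hstep (h : ℕ) :
      ∃ π : α → α, Measurable π ∧ (h < n → ∀ x ∈ A, π (S h x) = S (h + 1) x) := by
    by_cases hh : h < n
    · obtain ⟨π, hπ, hπS⟩ := exists_measurable_comp_eqOn hA (hS h) (hS (h + 1)) (hinj h hh)
      exact ⟨π, hπ, fun _ => hπS⟩
    · exact ⟨id, measurable_id, fun hh' => absurd hh' hh⟩
  choose π hπ hπS using hstep
  exact ⟨π, hπ, trajComp_eqOn hS0 hπS⟩

theorem stmt5_general {d : ℕ} (H : ℕ)
    (μsrc μtgt : Measure (EuclideanSpace ℝ (Fin d)))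
    [IsProbabilityMeasure μsrc] [IsProbabilityMeasure μtgt]
    (h2src : ∫⁻ x, (‖x‖₊ : ℝ≥0∞) ^ 2 ∂μsrc ≠ ⊤)
    (h2tgt : ∫⁻ x, (‖x‖₊ : ℝ≥0∞) ^ 2 ∂μtgt ≠ ⊤)
    (M : EuclideanSpace ℝ (Fin d) → EuclideanSpace ℝ (Fin d))
    (hMmeas : Measurable M) (hMpush : μsrc.map M = μtgt)
    (hMopt : 2⁻¹ * ∫⁻ x, (‖M x - x‖₊ : ℝ≥0∞) ^ 2 ∂μsrc = W2sq μsrc μtgt) :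
    ∃ π : ℕ → EuclideanSpace ℝ (Fin d) → EuclideanSpace ℝ (Fin d),
      (∀ h ≤ H, Measurable (π h)) ∧
      μsrc.map (trajComp π (H + 1)) = μtgt ∧
      ((H : ℝ≥0∞) + 1) / 2 *
          ∑ h ∈ Finset.range (H + 1),
            ∫⁻ x, (‖trajComp π (h + 1) x - trajComp π h x‖₊ : ℝ≥0∞) ^ 2 ∂μsrc =
        W2sq μsrc μtgt ∧
      ∀ h ≤ H, ∀ᵐ x ∂μsrc,
        trajComp π (h + 1) x = x + (((h : ℝ) + 1) / ((H : ℝ) + 1)) • (M x - x) := by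
  simp only [← enorm_eq_nnnorm] at h2src h2tgt hMopt ⊢
  have hMc : ∫⁻ x, ‖M x - x‖ₑ ^ 2 ∂μsrc ≠ ⊤ := by
    refine lintegral_enorm_sub_sq_ne_top hMmeas.aemeasurable ?_ h2src
    rwa [← lintegral_map (f := fun y => ‖y‖ₑ ^ 2) (by fun_prop) hMmeas, hMpush]
  obtain ⟨A, hA, hAμ, hmono⟩ := exists_ae_inner_nonneg_of_optimal_map hMmeas hMc
    fun γ _ hfst hsnd => le_lintegral_of_eq_W2sq hMopt γ hfst (hsnd.trans hMpush)
  set S : ℕ → EuclideanSpace ℝ (Fin d) → EuclideanSpace ℝ (Fin d) :=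
    fun h => interpolant M (h / ((H : ℝ) + 1))
  obtain ⟨π, hπ, htraj⟩ := exists_measurable_trajComp_eqOn (S := S) (n := H + 1) hA
    (fun h => measurable_interpolant hMmeas _) (fun x _ => by simp [S, interpolant])
    fun h hh => injOn_interpolant hmono (by positivity)
      ((div_lt_one (by positivity)).2 (by exact_mod_cast hh))
  refine ⟨π, fun h _ => hπ h, ?_, ?_, fun h hh => hAμ.mono fun x hx => ?_⟩
  · rw [← hMpush]
    refine Measure.map_congr (hAμ.mono fun x hx => ?_)
    rw [htraj (H + 1) le_rfl x hx]
    simp [S, interpolant, (by positivity : (H : ℝ) + 1 ≠ 0)]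
  · rw [← hMopt, ← dynamicCost_interpolant μsrc M H]
    congr 1
    refine Finset.sum_congr rfl fun h hh => lintegral_congr_ae (hAμ.mono fun x hx => ?_)
    have hh : h ≤ H := Finset.mem_range_succ_iff.1 hh
    simp only [htraj (h + 1) (by omega) x hx, htraj h (by omega) x hx, S, Nat.cast_add,
      Nat.cast_one]
  · rw [htraj (h + 1) (by omega) x hx]
    simp [S, interpolant]

/-- if an optimal Monge map `M⋆` exists, then there is a feasible policy
`(π⋆_0,…,π⋆_H)` whose dynamic cost equals `W₂²(μsrc, μtgt)`, and which can be chosen so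
that `π̄⋆_h(x) = x + ((h+1)/(H+1))(M⋆(x) − x)` for `μsrc`-a.e. `x` and every `h ≤ H`. -/
theorem stmt5 {d : ℕ} (hd : 1 ≤ d) (H : ℕ)
    (μsrc μtgt : Measure (EuclideanSpace ℝ (Fin d)))
    [IsProbabilityMeasure μsrc] [IsProbabilityMeasure μtgt]
    (h2src : ∫⁻ x, (‖x‖₊ : ℝ≥0∞) ^ 2 ∂μsrc ≠ ⊤)
    (h2tgt : ∫⁻ x, (‖x‖₊ : ℝ≥0∞) ^ 2 ∂μtgt ≠ ⊤)
    (M : EuclideanSpace ℝ (Fin d) → EuclideanSpace ℝ (Fin d))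
    (hMmeas : Measurable M) (hMpush : μsrc.map M = μtgt)
    (hMopt : 2⁻¹ * ∫⁻ x, (‖M x - x‖₊ : ℝ≥0∞) ^ 2 ∂μsrc = W2sq μsrc μtgt) :
    ∃ π : ℕ → EuclideanSpace ℝ (Fin d) → EuclideanSpace ℝ (Fin d),
      (∀ h ≤ H, Measurable (π h)) ∧
      μsrc.map (trajComp π (H + 1)) = μtgt ∧
      ((H : ℝ≥0∞) + 1) / 2 *
          ∑ h ∈ Finset.range (H + 1),
            ∫⁻ x, (‖trajComp π (h + 1) x - trajComp π h x‖₊ : ℝ≥0∞) ^ 2 ∂μsrc =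
        W2sq μsrc μtgt ∧
      ∀ h ≤ H, ∀ᵐ x ∂μsrc,
        trajComp π (h + 1) x = x + (((h : ℝ) + 1) / ((H : ℝ) + 1)) • (M x - x) :=
  stmt5_general H μsrc μtgt h2src h2tgt M hMmeas hMpush hMopt
end

section
/- Let Ω ⊂ ℝ^d be a nonempty compact convex set, let μ_src and μ_tgt be Borel probability measures supported in Ω, and let H ∈ ℕ. Let π⋆_0,…,π⋆_H : Ω → Ω be measurable maps with (π̄⋆_H)_# μ_src = μ_tgt (where π̄⋆_h := π⋆_h ∘ ⋯ ∘ π⋆_0 and π̄⋆_{−1} := id), and let V⋆ = (V⋆_0,…,V⋆_{H+1}) be feasible for the dynamic dual LP on Ω with horizon H. Assume the dynamic cost ((H+1)/2)·Σ_{h=0}^{H} ∫ ‖π̄⋆_h(x) − π̄⋆_{h−1}(x)‖² dμ_src(x) equals the dual objective ∫V⋆_0 dμ_src − ∫V⋆_{H+1} dμ_tgt. Then for every h ∈ {0,…,H} and (π̄⋆_{h−1})_# μ_src-almost every x ∈ Ω: V⋆_h(x) = min_{y∈Ω} { ((H+1)/2)‖x−y‖² + V⋆_{h+1}(y) }, and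 π⋆_h(x) attains this minimum, i.e. V⋆_h(x) = ((H+1)/2)‖x−π⋆_h(x)‖² + V⋆_{h+1}(π⋆_h(x)). -/
open MeasureTheory

/-- if a feasible policy's dynamic cost equals the objective of a feasible
dynamic dual family `V⋆`, then for every `h ≤ H` and `(π̄⋆_{h−1})_# μsrc`-a.e. `x`, the value
`V⋆_h(x)` is the minimum of `y ↦ ((H+1)/2)‖x−y‖² + V⋆_{h+1}(y)` over `Ω`, and `π⋆_h(x)`
attains this minimum. -/
theorem stmt12 {d : ℕ} (Ω : Set (EuclideanSpace ℝ (Fin d)))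
    (hne : Ω.Nonempty) (hcomp : IsCompact Ω) (hconv : Convex ℝ Ω)
    (μsrc μtgt : Measure Ω) [IsProbabilityMeasure μsrc] [IsProbabilityMeasure μtgt]
    (H : ℕ) (π : ℕ → Ω → Ω) (hπmeas : ∀ h ≤ H, Measurable (π h))
    (hπfeas : μsrc.map (trajComp π (H + 1)) = μtgt)
    (V : ℕ → Ω → ℝ) (hVcont : ∀ h ≤ H + 1, Continuous (V h))
    (hVfeas : ∀ h ≤ H, ∀ x y : Ω,
      V h x ≤ ((H : ℝ) + 1) / 2 * ‖x.val - y.val‖ ^ 2 + V (h + 1) y)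
    (hzero : ((H : ℝ) + 1) / 2 *
        ∑ h ∈ Finset.range (H + 1),
          ∫ x, ‖(trajComp π (h + 1) x).val - (trajComp π h x).val‖ ^ 2 ∂μsrc =
      ∫ x, V 0 x ∂μsrc - ∫ x, V (H + 1) x ∂μtgt) :
    ∀ h ≤ H, ∀ᵐ x ∂(μsrc.map (trajComp π h)),
      IsLeast (Set.range (fun y : Ω =>
          ((H : ℝ) + 1) / 2 * ‖x.val - y.val‖ ^ 2 + V (h + 1) y)) (V h x) ∧
      V h x = ((H : ℝ) + 1) / 2 * ‖x.val - (π h x).val‖ ^ 2 + V (h + 1) (π h x) := by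
  haveI : CompactSpace ↥Ω := isCompact_iff_compactSpace.mp hcomp
  -- measurability of trajectories
  have hTmeas : ∀ h ≤ H + 1, Measurable (trajComp π h) := by
    intro h hh
    induction h with
    | zero => exact measurable_id
    | succ n ih =>
        exact (hπmeas n (by omega)).comp (ih (by omega))
  -- the gap function
  set g : ℕ → Ω → ℝ := fun h z =>
    ((H : ℝ) + 1) / 2 * ‖z.val - (π h z).val‖ ^ 2 + V (h + 1) (π h z) - V h z with hg
  have hgmeas : ∀ h ≤ H, Measurable (g h) := by
    intro h hh
    have h1 : Measurable fun z : Ω => ‖z.val - (π h z).val‖ ^ 2 :=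
      ((measurable_subtype_coe.sub
        (measurable_subtype_coe.comp (hπmeas h hh))).norm).pow_const 2
    exact ((measurable_const.mul h1).add
      ((hVcont (h + 1) (by omega)).measurable.comp (hπmeas h hh))).sub
      (hVcont h (by omega)).measurable
  have hgnonneg : ∀ h ≤ H, ∀ z : Ω, 0 ≤ g h z := by
    intro h hh z
    have := hVfeas h hh z (π h z)
    simp only [hg]
    linarith
  -- uniform bounds
  have hVbdd : ∀ k ≤ H + 1, ∃ C : ℝ, ∀ z : Ω, |V k z| ≤ C := by
    intro k hk
    obtain ⟨C, hC⟩ := (isCompact_range ((hVcont k hk).norm)).bddAbove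
    exact ⟨C, fun z => hC ⟨z, rfl⟩⟩
  obtain ⟨Cn, hCn⟩ : ∃ C : ℝ, ∀ a b : Ω, ‖a.val - b.val‖ ^ 2 ≤ C := by
    have hcont : Continuous fun p : ↥Ω × ↥Ω => ‖p.1.val - p.2.val‖ ^ 2 := by
      fun_prop
    obtain ⟨C, hC⟩ := (isCompact_range hcont).bddAbove
    exact ⟨C, fun a b => hC ⟨(a, b), rfl⟩⟩
  -- integrability of pieces
  have hAint : ∀ h ≤ H, Integrable
      (fun x => ‖(trajComp π (h + 1) x).val - (trajComp π h x).val‖ ^ 2) μsrc := by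
    intro h hh
    have hm : Measurable fun x =>
        ‖(trajComp π (h + 1) x).val - (trajComp π h x).val‖ ^ 2 :=
      (((measurable_subtype_coe.comp (hTmeas (h + 1) (by omega))).sub
        (measurable_subtype_coe.comp (hTmeas h (by omega)))).norm).pow_const 2
    refine (integrable_const Cn).mono' hm.aestronglyMeasurable ?_
    filter_upwards with x
    rw [Real.norm_eq_abs, abs_of_nonneg (by positivity)]
    exact hCn _ _
  have hBint : ∀ k ≤ H + 1, Integrable (fun x => V k (trajComp π k x)) μsrc := by
    intro k hk
    obtain ⟨C, hC⟩ := hVbdd k hk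
    refine (integrable_const C).mono'
      (((hVcont k hk).measurable.comp (hTmeas k hk)).aestronglyMeasurable) ?_
    filter_upwards with x
    simpa [Real.norm_eq_abs] using hC _
  have hFint : ∀ h ≤ H, Integrable (fun x => g h (trajComp π h x)) μsrc := by
    intro h hh
    have heq : (fun x => g h (trajComp π h x)) = fun x =>
        ((H : ℝ) + 1) / 2 * ‖(trajComp π (h + 1) x).val - (trajComp π h x).val‖ ^ 2
          + V (h + 1) (trajComp π (h + 1) x) - V h (trajComp π h x) := by
      funext x; simp only [hg, trajComp, Function.comp_apply, norm_sub_rev]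
    rw [heq]
    exact (((hAint h (by omega)).const_mul _).add (hBint (h + 1) (by omega))).sub
      (hBint h (by omega))
  -- the sum of the gap integrals vanishes
  have hkey : ∑ h ∈ Finset.range (H + 1), ∫ x, g h (trajComp π h x) ∂μsrc = 0 := by
    have hsplit : ∀ h ∈ Finset.range (H + 1),
        ∫ x, g h (trajComp π h x) ∂μsrc =
          ((H : ℝ) + 1) / 2 *
            ∫ x, ‖(trajComp π (h + 1) x).val - (trajComp π h x).val‖ ^ 2 ∂μsrc
          + ((∫ x, V (h + 1) (trajComp π (h + 1) x) ∂μsrc)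
            - ∫ x, V h (trajComp π h x) ∂μsrc) := by
      intro h hh
      rw [Finset.mem_range] at hh
      have heq : (fun x => g h (trajComp π h x)) = fun x =>
          (((H : ℝ) + 1) / 2 * ‖(trajComp π (h + 1) x).val - (trajComp π h x).val‖ ^ 2
            + V (h + 1) (trajComp π (h + 1) x)) - V h (trajComp π h x) := by
        funext x; simp only [hg, trajComp, Function.comp_apply, norm_sub_rev]
      have I2 : Integrable (fun x =>
          ((H : ℝ) + 1) / 2 *
            ‖(trajComp π (h + 1) x).val - (trajComp π h x).val‖ ^ 2) μsrc :=
        (hAint h (by omega)).const_mul _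
      have I1 : Integrable (fun x =>
          ((H : ℝ) + 1) / 2 * ‖(trajComp π (h + 1) x).val - (trajComp π h x).val‖ ^ 2
            + V (h + 1) (trajComp π (h + 1) x)) μsrc :=
        I2.add (hBint (h + 1) (by omega))
      rw [heq, integral_sub I1 (hBint h (by omega)),
        integral_add I2 (hBint (h + 1) (by omega)), integral_const_mul]
      ring
    rw [Finset.sum_congr rfl hsplit, Finset.sum_add_distrib, ← Finset.mul_sum,
      Finset.sum_range_sub (fun k => ∫ x, V k (trajComp π k x) ∂μsrc), hzero]
    have hlast : ∫ x, V (H + 1) (trajComp π (H + 1) x) ∂μsrc =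
        ∫ x, V (H + 1) x ∂μtgt := by
      rw [← hπfeas, integral_map (hTmeas (H + 1) le_rfl).aemeasurable
        ((hVcont (H + 1) le_rfl).aestronglyMeasurable)]
    have hfirst : ∫ x, V 0 (trajComp π 0 x) ∂μsrc = ∫ x, V 0 x ∂μsrc := rfl
    rw [hlast, hfirst]
    ring
  -- each gap integral vanishes, hence each gap vanishes a.e.
  have heach : ∀ h ∈ Finset.range (H + 1), ∫ x, g h (trajComp π h x) ∂μsrc = 0 :=
    (Finset.sum_eq_zero_iff_of_nonneg (fun h hh => by
      rw [Finset.mem_range] at hh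
      exact integral_nonneg fun x => hgnonneg h (by omega) _)).mp hkey
  intro h hh
  have hzero' : (fun x => g h (trajComp π h x)) =ᵐ[μsrc] 0 :=
    (integral_eq_zero_iff_of_nonneg (fun x => hgnonneg h hh _)
      (hFint h hh)).mp (heach h (Finset.mem_range.mpr (by omega)))
  have hae : ∀ᵐ x ∂(μsrc.map (trajComp π h)), g h x = 0 := by
    have hms : MeasurableSet {x : Ω | g h x = 0} :=
      (hgmeas h hh) (measurableSet_singleton (0 : ℝ))
    rw [ae_map_iff (hTmeas h (by omega)).aemeasurable hms]
    filter_upwards [hzero'] with x hx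
    exact hx
  filter_upwards [hae] with x hx
  have hx' : V h x = ((H : ℝ) + 1) / 2 * ‖x.val - (π h x).val‖ ^ 2 + V (h + 1) (π h x) := by
    simp only [hg] at hx
    linarith
  refine ⟨⟨⟨π h x, hx'.symm⟩, ?_⟩, hx'⟩
  rintro z ⟨y, rfl⟩
  exact hVfeas h hh x y
end
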